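/- Let n ≥ 5 be an integer, α,β,γ ∈ ℂ, and let d be a derivation of the Leibniz algebra 𝓛(α,β,γ). Then d is nilpotent as a linear operator (d^k = 0 for some k ≥ 1) if and only if the coefficient of e_1 in d(e_1) and the coefficient of e_{n−1} in d(e_{n−1}) (with respect to the basis e_1,…,e_n) are both zero. -/

import Mathlib

open scoped BigOperators

noncomputable section

/-- `stdE n i` : the `i`-th standard basis vector of `Fin n → ℂ` (1-based indexing);
zero when `i` is out of range. -/
def stdE (n : ℕ) (i : ℕ) : Fin n → ℂ := fun j => if (j : ℕ) + 1 = i then 1 else 0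

/-- The bilinear bracket on `Fin n → ℂ` determined by structure constants `c`
(1-based indices). -/
def scBr (n : ℕ) (c : ℕ → ℕ → Fin n → ℂ) (x y : Fin n → ℂ) : Fin n → ℂ :=
  ∑ i : Fin n, ∑ j : Fin n, (x i * y j) • c ((i : ℕ) + 1) ((j : ℕ) + 1)

/-- Structure constants of the Leibniz algebra `𝓛(α,β,γ)`: the only nonzero products of
basis vectors are `[e_i,e_1]=e_{i+1}` for `1 ≤ i ≤ n-3`, `[e_{n-1},e_1]=e_n+α e_2`,
`[e_1,e_{n-1}]=β e_n`, `[e_{n-1},e_{n-1}]=γ e_n`. -/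
def Lc (n : ℕ) (α β γ : ℂ) (i j : ℕ) : Fin n → ℂ :=
  (if 1 ≤ i ∧ i ≤ n - 3 ∧ j = 1 then stdE n (i + 1) else 0)
  + (if i = n - 1 ∧ j = 1 then stdE n n + α • stdE n 2 else 0)
  + (if i = 1 ∧ j = n - 1 then β • stdE n n else 0)
  + (if i = n - 1 ∧ j = n - 1 then γ • stdE n n else 0)

/-- `d` is a derivation of the bracket determined by the structure constants `c`. -/
def IsDer (n : ℕ) (c : ℕ → ℕ → Fin n → ℂ) (d : (Fin n → ℂ) →ₗ[ℂ] (Fin n → ℂ)) : Prop :=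
  ∀ x y : Fin n → ℂ, d (scBr n c x y) = scBr n c (d x) y + scBr n c x (d y)


/-!
Write `a`, `b` for the two diagonal coefficients of `d` in question and `c` for the
`e_{n-1}`-coefficient of `d e₁`. The derivation rule on pairs of basis vectors shows that the
`e₁`-row of the matrix of `d` is `(a, 0, …, 0)` and its `e_{n-1}`-row is `c e₁* + b e_{n-1}*`.
So `d` multiplies the coordinate `x₁` by `a`, and the coordinate `x_{n-1}` by `b` on the
`d`-invariant hyperplane `x₁ = 0`; iterating, both vanish when `d` is nilpotent. Conversely, if
`a = b = 0` these relations force `α c = γ c = 0`, and then `d` is strictly triangular with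
respect to the ordering `e₁, e_{n-1}, e₂, …, e_{n-3}, e_n, e_{n-2}` of the basis, so `d ^ n = 0`.
-/

theorem LinearMap.apply_pi_eq_sum_single {ι R : Type*} [Fintype ι] [DecidableEq ι] [Semiring R]
    (f : (ι → R) →ₗ[R] (ι → R)) (x : ι → R) (i : ι) :
    f x i = ∑ j, x j * f (Pi.single j 1) i := by
  conv_lhs => rw [LinearMap.pi_apply_eq_sum_univ f x]
  simp only [Finset.sum_apply, Pi.smul_apply, smul_eq_mul]
  refine Finset.sum_congr rfl fun j _ => ?_
  rw [show (fun k => if j = k then (1 : R) else 0) = Pi.single j 1 from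
    funext fun k => by simp [Pi.single_apply, eq_comm]]

theorem LinearMap.pow_eq_zero_of_apply_single_eq_zero {ι R : Type*} [Fintype ι] [DecidableEq ι]
    [Semiring R] (f : (ι → R) →ₗ[R] (ι → R)) (w : ι → ℕ) {N : ℕ} (hN : ∀ i, w i < N)
    (hf : ∀ i j, w i ≤ w j → f (Pi.single j 1) i = 0) : f ^ N = 0 := by
  have key : ∀ m x i, w i < m → (f ^ m) x i = 0 := by
    intro m
    induction m with
    | zero => intro x i hi; omega
    | succ m ih =>
      intro x i hi
      rw [pow_succ', Module.End.mul_apply, LinearMap.apply_pi_eq_sum_single]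
      refine Finset.sum_eq_zero fun j _ => ?_
      by_cases hj : w j < m
      · rw [ih x j hj, zero_mul]
      · rw [hf i j (by omega), mul_zero]
  exact LinearMap.ext fun x => funext fun i => key N x i (hN i)

theorem eq_zero_of_pow_eq_zero_of_mapsTo {R M : Type*} [Semiring R] [NoZeroDivisors R]
    [AddCommMonoid M] [Module R M] {f : M →ₗ[R] M} {k : ℕ} (hk : k ≠ 0) (hfk : f ^ k = 0)
    (φ : M →ₗ[R] R) {S : Set M} (hS : Set.MapsTo f S S) {c : R}
    (hφ : ∀ x ∈ S, φ (f x) = c * φ x) {x : M} (hx : x ∈ S) (hφx : φ x ≠ 0) : c = 0 := by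
  have pow_apply : ∀ m, (f ^ m) x ∈ S ∧ φ ((f ^ m) x) = c ^ m * φ x := by
    intro m
    induction m with
    | zero => simp [hx]
    | succ m ih =>
      rw [pow_succ', Module.End.mul_apply, pow_succ', mul_assoc, ← ih.2]
      exact ⟨hS ih.1, hφ _ ih.1⟩
  have h := (pow_apply k).2
  rw [hfk, LinearMap.zero_apply, map_zero, eq_comm, mul_eq_zero] at h
  exact pow_eq_zero_iff hk |>.mp (h.resolve_right hφx)

section

open Finset

variable {n : ℕ} {α β γ : ℂ} {d : (Fin n → ℂ) →ₗ[ℂ] (Fin n → ℂ)}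

/-- The coordinate of index `i` (1-based, as `stdE`), and `0` when `i` is not in `[1, n]`. -/
def coord (n i : ℕ) : (Fin n → ℂ) →ₗ[ℂ] ℂ :=
  if h : 1 ≤ i ∧ i ≤ n then LinearMap.proj ⟨i - 1, by omega⟩ else 0

def entry (d : (Fin n → ℂ) →ₗ[ℂ] (Fin n → ℂ)) (p j : ℕ) : ℂ := coord n p (d (stdE n j))

/-- Coordinate `q` of `[x, e₁]` in `𝓛(α,β,γ)`. -/
def rightMulE1 (n : ℕ) (α : ℂ) (x : Fin n → ℂ) (q : ℕ) : ℂ :=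
  (if 2 ≤ q ∧ q ≤ n - 2 then coord n (q - 1) x else 0)
    + (if q = n then coord n (n - 1) x else 0) + (if q = 2 then α * coord n (n - 1) x else 0)

def weight (n j : ℕ) : ℕ :=
  if j = 1 then 0 else if j = n - 1 then 1 else if j = n then n - 2 else if j = n - 2 then n - 1
  else j

lemma coord_succ (p : Fin n) (x : Fin n → ℂ) : coord n (p + 1) x = x p := by
  simp [coord]

lemma coord_zero (x : Fin n → ℂ) : coord n 0 x = 0 := by
  simp [coord]

lemma coord_stdE (p j : ℕ) :
    coord n p (stdE n j) = if p = j ∧ 1 ≤ p ∧ p ≤ n then 1 else 0 := by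
  unfold coord stdE
  split_ifs <;> simp_all <;> omega

lemma stdE_succ (j : Fin n) : stdE n (j + 1) = Pi.single j 1 := by
  funext p
  simp [stdE, Pi.single_apply, Fin.ext_iff]

lemma sum_univ_mul_eq_sum_range_coord (x : Fin n → ℂ) (g : ℕ → ℂ) :
    ∑ i : Fin n, x i * g (i + 1) = ∑ i ∈ range (n + 1), coord n i x * g i := by
  rw [sum_range_succ', coord_zero, zero_mul, add_zero,
    ← Fin.sum_univ_eq_sum_range (fun i => coord n (i + 1) x * g (i + 1))]
  simp only [coord_succ]

lemma coord_apply_eq_sum_entry (f : (Fin n → ℂ) →ₗ[ℂ] (Fin n → ℂ)) (x : Fin n → ℂ) (p : ℕ) :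
    coord n p (f x) = ∑ j ∈ range (n + 1), coord n j x * entry f p j := by
  rw [← sum_univ_mul_eq_sum_range_coord, LinearMap.pi_apply_eq_sum_univ f x, map_sum]
  refine sum_congr rfl fun j _ => ?_
  rw [map_smul, entry, stdE_succ, smul_eq_mul]
  congr 3
  funext k
  simp [Pi.single_apply, eq_comm]

lemma coord_scBr (c : ℕ → ℕ → Fin n → ℂ) (x y : Fin n → ℂ) (p : ℕ) :
    coord n p (scBr n c x y) = ∑ i ∈ range (n + 1), coord n i x *
      ∑ j ∈ range (n + 1), coord n j y * coord n p (c i j) := by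
  simp only [scBr, map_sum, map_smul, smul_eq_mul, mul_assoc, ← mul_sum]
  rw [← sum_univ_mul_eq_sum_range_coord]
  refine sum_congr rfl fun i _ => ?_
  rw [← sum_univ_mul_eq_sum_range_coord]

lemma scBr_stdE_stdE (c : ℕ → ℕ → Fin n → ℂ) {i j : ℕ} (hi : 1 ≤ i ∧ i ≤ n)
    (hj : 1 ≤ j ∧ j ≤ n) : scBr n c (stdE n i) (stdE n j) = c i j := by
  obtain ⟨i, rfl⟩ : ∃ i' : Fin n, i = i' + 1 := ⟨⟨i - 1, by omega⟩, by simp; omega⟩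
  obtain ⟨j, rfl⟩ : ∃ j' : Fin n, j = j' + 1 := ⟨⟨j - 1, by omega⟩, by simp; omega⟩
  simp [scBr, stdE_succ, Pi.single_apply]

lemma coord_Lc (hn : 5 ≤ n) (p i j : ℕ) :
    coord n p (Lc n α β γ i j) =
      (if j = 1 ∧ i = p - 1 ∧ 2 ≤ p ∧ p ≤ n - 2 then 1 else 0)
      + (if j = 1 ∧ i = n - 1 then (if p = n then 1 else 0) + (if p = 2 then α else 0) else 0)
      + (if j = n - 1 ∧ i = 1 ∧ p = n then β else 0)
      + (if j = n - 1 ∧ i = n - 1 ∧ p = n then γ else 0) := by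
  simp only [Lc, map_add, map_smul, coord_stdE, smul_eq_mul, apply_ite (coord n p), map_zero]
  congr 1; congr 1; congr 1
  all_goals split_ifs <;> first | ring1 | (exfalso; omega)

lemma coord_scBr_Lc (hn : 5 ≤ n) (x y : Fin n → ℂ) (q : ℕ) :
    coord n q (scBr n (Lc n α β γ) x y) = coord n 1 y * rightMulE1 n α x q
      + (if q = n then (β * coord n 1 x + γ * coord n (n - 1) x) * coord n (n - 1) y else 0) := by
  have h1 : 1 < n + 1 := by omega
  have h2 : n - 1 < n + 1 := by omega
  simp only [coord_scBr, coord_Lc hn, rightMulE1, mul_add, mul_ite, mul_zero, mul_one,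
    sum_add_distrib, ite_and, sum_ite_eq', mem_range, h1, h2, if_true]
  split_ifs <;> first | ring1 | (exfalso; omega)

namespace IsDer

lemma coord_apply_Lc (hn : 5 ≤ n) (hd : IsDer n (Lc n α β γ) d) {i j : ℕ}
    (hi : 1 ≤ i ∧ i ≤ n) (hj : 1 ≤ j ∧ j ≤ n) (q : ℕ) :
    coord n q (d (Lc n α β γ i j)) =
      coord n 1 (stdE n j) * rightMulE1 n α (d (stdE n i)) q
      + (if q = n then (β * entry d 1 i + γ * entry d (n - 1) i) * coord n (n - 1) (stdE n j)
          else 0)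
      + (entry d 1 j * rightMulE1 n α (stdE n i) q
      + (if q = n then (β * coord n 1 (stdE n i) + γ * coord n (n - 1) (stdE n i))
          * entry d (n - 1) j else 0)) := by
  rw [← scBr_stdE_stdE (Lc n α β γ) hi hj, hd, map_add, coord_scBr_Lc hn, coord_scBr_Lc hn]
  rfl

lemma entry_succ (hn : 5 ≤ n) (hd : IsDer n (Lc n α β γ) d) {k : ℕ} (hk : 1 ≤ k)
    (hkn : k ≤ n - 3) (q : ℕ) :
    entry d q (k + 1) = rightMulE1 n α (d (stdE n k)) q + (if q = k + 1 then entry d 1 1 else 0)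
      + (if q = n ∧ k = 1 then β * entry d (n - 1) 1 else 0) := by
  have h := hd.coord_apply_Lc hn (i := k) (j := 1) (by omega) (by omega) q
  simp (disch := omega) only [Lc, rightMulE1, coord_stdE, if_pos, if_neg, and_true, true_and,
    add_zero, mul_zero, one_mul, ite_self] at h
  rw [entry, h, rightMulE1]
  split_ifs <;> first | ring1 | (exfalso; omega)

lemma rightMulE1_map_last_eq_zero (hn : 5 ≤ n) (hd : IsDer n (Lc n α β γ) d) (q : ℕ) :
    rightMulE1 n α (d (stdE n n)) q = 0 := by
  have h := hd.coord_apply_Lc hn (i := n) (j := 1) (by omega) (by omega) q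
  simp (disch := omega) only [Lc, rightMulE1, coord_stdE, if_pos, if_neg, and_true, true_and,
    map_zero, add_zero, mul_zero, zero_mul, one_mul, ite_self] at h
  rw [rightMulE1, ← h]

lemma entry_one_eq_zero (hn : 5 ≤ n) (hd : IsDer n (Lc n α β γ) d) {m : ℕ} (hm : 2 ≤ m)
    (hmn : m ≤ n) : entry d 1 m = 0 := by
  by_cases hm' : m = n - 1
  · have h := hd.coord_apply_Lc hn (i := 2) (j := n - 1) (by omega) (by omega) 3
    subst hm'
    simpa (disch := omega) [Lc, rightMulE1, coord_stdE, if_pos, if_neg, eq_comm] using h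
  · have h := hd.coord_apply_Lc hn (i := 1) (j := m) (by omega) (by omega) 2
    simpa (disch := omega) [Lc, rightMulE1, coord_stdE, if_pos, if_neg, eq_comm] using h

lemma entry_sub_one_eq_zero (hn : 5 ≤ n) (hd : IsDer n (Lc n α β γ) d) {m : ℕ} (hm : 2 ≤ m)
    (hm' : m ≠ n - 1) (hmn : m ≤ n) : entry d (n - 1) m = 0 := by
  by_cases hmn' : m = n
  · have h := hd.rightMulE1_map_last_eq_zero hn n
    simp (disch := omega) only [rightMulE1, if_neg, zero_add, add_zero] at h
    rwa [hmn']
  · obtain ⟨k, rfl⟩ : ∃ k, m = k + 1 := ⟨m - 1, by omega⟩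
    rw [hd.entry_succ hn (by omega) (by omega)]
    simp (disch := omega) only [rightMulE1, if_neg, add_zero]

lemma entry_last_eq_zero_of_le (hn : 5 ≤ n) (hd : IsDer n (Lc n α β γ) d) {q : ℕ}
    (hq : q ≤ n - 3) : entry d q n = 0 := by
  have h := hd.rightMulE1_map_last_eq_zero hn (q + 1)
  have hrow : entry d (n - 1) n = 0 := hd.entry_sub_one_eq_zero hn (by omega) (by omega) le_rfl
  rcases Nat.eq_zero_or_pos q with rfl | hq0
  · exact coord_zero _
  rw [entry] at hrow
  simp (disch := omega) only [rightMulE1, if_pos, if_neg, hrow, mul_zero, ite_self, add_zero,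
    Nat.add_sub_cancel] at h
  exact h

lemma alpha_mul_entry_eq_zero (hn : 5 ≤ n) (hd : IsDer n (Lc n α β γ) d)
    (ha : entry d 1 1 = 0) (hb : entry d (n - 1) (n - 1) = 0) :
    α * entry d (n - 1) 1 = 0 := by
  have hL := hd.coord_apply_Lc hn (i := n - 1) (j := 1) (by omega) (by omega) 2
  have h22 := hd.entry_succ hn (k := 1) le_rfl (by omega) 2
  have h2n := hd.entry_last_eq_zero_of_le hn (q := 2) (by omega)
  have h1n := hd.entry_one_eq_zero hn (m := n - 1) (by omega) (by omega)
  simp (disch := omega) only [Lc, rightMulE1, coord_stdE, if_pos, if_neg, and_true, true_and,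
    ite_true, map_add, map_smul, smul_eq_mul, add_zero, zero_add, one_mul, mul_one, Nat.reduceAdd,
    Nat.reduceSub] at hL h22
  simp only [← entry.eq_def] at *
  have hsq : α * (α * entry d (n - 1) 1) = 0 := by
    linear_combination hL - α * h22 - h2n + h1n + α * hb - α * ha
  rcases mul_eq_zero.mp hsq with h0 | h0
  · rw [h0, zero_mul]
  · exact h0

lemma entry_last_last_eq_zero (hn : 5 ≤ n) (hd : IsDer n (Lc n α β γ) d)
    (ha : entry d 1 1 = 0) (hb : entry d (n - 1) (n - 1) = 0) : entry d n n = 0 := by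
  have hα := hd.alpha_mul_entry_eq_zero hn ha hb
  have h1n := hd.entry_one_eq_zero hn (m := n - 1) (by omega) (by omega)
  have hL := hd.coord_apply_Lc hn (i := n - 1) (j := 1) (by omega) (by omega) n
  have hLL := hd.coord_apply_Lc hn (i := n - 1) (j := n - 1) (by omega) (by omega) n
  have hn2 := hd.entry_succ hn (k := 1) le_rfl (by omega) n
  simp (disch := omega) only [Lc, rightMulE1, coord_stdE, if_pos, if_neg, and_true, true_and,
    ite_true, ite_self, map_add, map_smul, smul_eq_mul, add_zero, zero_add, mul_zero, zero_mul,
    one_mul, mul_one, Nat.reduceAdd] at hL hLL hn2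
  simp only [← entry.eq_def] at *
  have hγ : γ * entry d n n = 0 := by linear_combination hLL + (β + 1) * h1n + 2 * γ * hb
  have hnn : entry d n n = γ * entry d (n - 1) 1 := by
    linear_combination hL - α * hn2 + hb + ha - (1 + β) * hα
  rw [hnn] at hγ ⊢
  rcases mul_eq_zero.mp hγ with h0 | h0
  · rw [h0, zero_mul]
  · exact h0

lemma entry_eq_zero_of_le (hn : 5 ≤ n) (hd : IsDer n (Lc n α β γ) d)
    (ha : entry d 1 1 = 0) (hb : entry d (n - 1) (n - 1) = 0) {k q : ℕ} (hk : 2 ≤ k)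
    (hkn : k ≤ n - 2) (hq : q ≤ k) : entry d q k = 0 := by
  induction k, hk using Nat.le_induction generalizing q with
  | base =>
    have hα := hd.alpha_mul_entry_eq_zero hn ha hb
    rw [hd.entry_succ hn le_rfl (by omega)]
    simp only [entry] at ha hα
    interval_cases q <;> simp (disch := omega) [rightMulE1, entry, coord_zero, ha, hα]
  | succ k hk ih =>
    rw [hd.entry_succ hn (by omega) (by omega)]
    have hrow := hd.entry_sub_one_eq_zero hn hk (by omega) (by omega)
    have hprev : entry d (q - 1) k = 0 := ih (by omega) (by omega)
    simp only [entry] at ha hprev hrow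
    simp (disch := omega) [rightMulE1, entry, if_neg, ha, hprev, hrow]

lemma entry_sub_two_eq_zero (hn : 5 ≤ n) (hd : IsDer n (Lc n α β γ) d)
    (ha : entry d 1 1 = 0) (hb : entry d (n - 1) (n - 1) = 0) (q : ℕ) :
    entry d q (n - 2) = 0 := by
  rcases (show q ≤ n - 2 ∨ q = n - 1 ∨ q = n ∨ n < q by omega) with hq | hq | hq | hq
  · exact hd.entry_eq_zero_of_le hn ha hb (by omega) le_rfl hq
  · rw [hq]
    exact hd.entry_sub_one_eq_zero hn (by omega) (by omega) (by omega)
  · rw [hq]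
    have hrow := hd.entry_sub_one_eq_zero hn (m := n - 3) (by omega) (by omega) (by omega)
    rw [show n - 2 = n - 3 + 1 by omega, hd.entry_succ hn (by omega) le_rfl]
    simp only [entry] at hrow
    simp (disch := omega) [rightMulE1, entry, if_neg, hrow]
  · simp (disch := omega) [entry, coord, dif_neg]

lemma entry_eq_zero_of_weight_le (hn : 5 ≤ n) (hd : IsDer n (Lc n α β γ) d)
    (ha : entry d 1 1 = 0) (hb : entry d (n - 1) (n - 1) = 0) {p j : ℕ} (hp : 1 ≤ p)
    (hpn : p ≤ n) (hj : 1 ≤ j) (hjn : j ≤ n) (h : weight n p ≤ weight n j) :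
    entry d p j = 0 := by
  unfold weight at h
  by_cases hp1 : p = 1
  · rcases (show j = 1 ∨ 2 ≤ j by omega) with hj1 | hj2
    · rwa [hp1, hj1]
    · rw [hp1]; exact hd.entry_one_eq_zero hn hj2 hjn
  by_cases hpn1 : p = n - 1
  · rcases (show j = n - 1 ∨ 2 ≤ j ∧ j ≠ n - 1 by split_ifs at h <;> omega) with hj1 | hj2
    · rwa [hpn1, hj1]
    · rw [hpn1]; exact hd.entry_sub_one_eq_zero hn hj2.1 hj2.2 hjn
  by_cases hjn2 : j = n - 2
  · rw [hjn2]; exact hd.entry_sub_two_eq_zero hn ha hb p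
  by_cases hjl : j = n
  · rw [hjl]
    rcases (show p ≤ n - 3 ∨ p = n by split_ifs at h <;> omega) with hp3 | hpl
    · exact hd.entry_last_eq_zero_of_le hn hp3
    · rw [hpl]; exact hd.entry_last_last_eq_zero hn ha hb
  · have hjp : 2 ≤ j ∧ j ≤ n - 3 ∧ p ≤ j := by split_ifs at h <;> omega
    exact hd.entry_eq_zero_of_le hn ha hb hjp.1 (by omega) hjp.2.2

lemma pow_eq_zero (hn : 5 ≤ n) (hd : IsDer n (Lc n α β γ) d)
    (ha : entry d 1 1 = 0) (hb : entry d (n - 1) (n - 1) = 0) : d ^ n = 0 := by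
  refine d.pow_eq_zero_of_apply_single_eq_zero (fun p => weight n (p + 1))
    (fun p => by unfold weight; split_ifs <;> omega) fun p j h => ?_
  rw [← stdE_succ, ← coord_succ p (d _)]
  exact hd.entry_eq_zero_of_weight_le hn ha hb (by omega) p.2 (by omega) j.2 h

lemma coord_one_apply (hn : 5 ≤ n) (hd : IsDer n (Lc n α β γ) d) (x : Fin n → ℂ) :
    coord n 1 (d x) = entry d 1 1 * coord n 1 x := by
  rw [coord_apply_eq_sum_entry, sum_eq_single 1]
  · rw [mul_comm]
  · intro j hj hj1
    rcases Nat.eq_zero_or_pos j with rfl | hj0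
    · rw [coord_zero, zero_mul]
    · rw [hd.entry_one_eq_zero hn (by omega) (by simp at hj; omega), mul_zero]
  · exact fun h => absurd (mem_range.mpr (by omega)) h

lemma coord_sub_one_apply (hn : 5 ≤ n) (hd : IsDer n (Lc n α β γ) d) (x : Fin n → ℂ) :
    coord n (n - 1) (d x) =
      entry d (n - 1) 1 * coord n 1 x + entry d (n - 1) (n - 1) * coord n (n - 1) x := by
  rw [coord_apply_eq_sum_entry, sum_eq_add_of_mem 1 (n - 1) (mem_range.mpr (by omega))
    (mem_range.mpr (by omega)) (by omega)]
  · simp only [mul_comm]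
  · intro j hj hj'
    rcases Nat.eq_zero_or_pos j with rfl | hj0
    · rw [coord_zero, zero_mul]
    · rw [hd.entry_sub_one_eq_zero hn (by omega) hj'.2 (by simp at hj; omega), mul_zero]

lemma diag_eq_zero_of_pow_eq_zero (hn : 5 ≤ n) (hd : IsDer n (Lc n α β γ) d) {k : ℕ}
    (hk : k ≠ 0) (hdk : d ^ k = 0) : entry d 1 1 = 0 ∧ entry d (n - 1) (n - 1) = 0 := by
  have ha : entry d 1 1 = 0 :=
    eq_zero_of_pow_eq_zero_of_mapsTo hk hdk (coord n 1) (Set.mapsTo_univ _ _)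
      (fun x _ => hd.coord_one_apply hn x) (Set.mem_univ (stdE n 1)) (by simp [coord_stdE]; omega)
  refine ⟨ha, eq_zero_of_pow_eq_zero_of_mapsTo hk hdk (coord n (n - 1)) (S := {x | coord n 1 x = 0})
    (fun x hx => ?_) (fun x hx => ?_) (x := stdE n (n - 1)) ?_ ?_⟩
  · show coord n 1 (d x) = 0
    rw [hd.coord_one_apply hn, ha, zero_mul]
  · rw [hd.coord_sub_one_apply hn, show coord n 1 x = 0 from hx, mul_zero, zero_add]
  · simp [coord_stdE]; omega
  · simp [coord_stdE]; omega

end IsDer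

end

theorem nilpotent_derivation_iff_L (n : ℕ) (hn : 5 ≤ n) (α β γ : ℂ)
    (d : (Fin n → ℂ) →ₗ[ℂ] (Fin n → ℂ)) (hd : IsDer n (Lc n α β γ) d) :
    (∃ k : ℕ, 1 ≤ k ∧ d ^ k = 0) ↔
      (d (stdE n 1) (⟨0, by omega⟩ : Fin n) = 0 ∧
       d (stdE n (n - 1)) (⟨n - 2, by omega⟩ : Fin n) = 0) := by
  have ha : d (stdE n 1) ⟨0, by omega⟩ = entry d 1 1 := (coord_succ ⟨0, by omega⟩ _).symm
  have hb : d (stdE n (n - 1)) ⟨n - 2, by omega⟩ = entry d (n - 1) (n - 1) := by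
    rw [entry, ← coord_succ ⟨n - 2, by omega⟩ (d _), show n - 2 + 1 = n - 1 by omega]
  rw [ha, hb]
  constructor
  · rintro ⟨k, hk, hdk⟩
    exact hd.diag_eq_zero_of_pow_eq_zero hn (by omega) hdk
  · rintro ⟨ha, hb⟩
    exact ⟨n, by omega, hd.pow_eq_zero hn ha hb⟩
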